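/- arXiv:2209.10206 — 3 statements merged into one kernel-verified Lean document; each statement's English description precedes it below -/
import Mathlib

section
/- Given the location ℓ_a ∈ L of superpower a's club good, any two club-formation sequences have the same union (the process is order-independent), so the maximum sphere of influence I*(ℓ_a) is well defined; moreover the single-term sequence consisting of I*(ℓ_a) itself is a club-formation sequence, i.e., the shortest club-formation sequence has length one. -/
open Finset

/-- Union of a list of finsets. -/
def listUnion {ι : Type*} [DecidableEq ι] (s : List (Finset ι)) : Finset ι :=
  s.foldr (· ∪ ·) ∅

/-- A stage-one club-formation sequence `I₁, …, I_m` for superpower `a`'s club good, given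
the benefit `ben i = g_{ia} (1 - d(i, ℓ_a))` each small country `i` derives from the club
good and the cost functions `ρ i`: the terms are pairwise disjoint, every member of `I_k`
gets a nonnegative payoff once `I₁ ∪ ⋯ ∪ I_k` has joined, and no further nonempty group of
outside countries could jointly join with everyone getting a nonnegative payoff. -/
def IsClubFormationSeq {ι : Type*} [Fintype ι] [DecidableEq ι]
    (ben : ι → ℝ) (ρ : ι → Finset ι → ℝ) (s : List (Finset ι)) : Prop :=
  s.Pairwise Disjoint ∧
  (∀ k : Fin s.length, ∀ i ∈ s.get k, 0 ≤ ben i - ρ i (listUnion (s.take (k.val + 1)))) ∧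
  ¬ ∃ J : Finset ι, J.Nonempty ∧ J ⊆ Finset.univ \ listUnion s ∧
      ∀ i ∈ J, 0 ≤ ben i - ρ i (listUnion s ∪ J)

lemma listUnion_append {ι : Type*} [DecidableEq ι] (l₁ l₂ : List (Finset ι)) :
    listUnion (l₁ ++ l₂) = listUnion l₁ ∪ listUnion l₂ := by
  induction l₁ with
  | nil => simp [listUnion]
  | cons a l ih => simp [listUnion, List.foldr_cons] at ih ⊢; rw [ih]

lemma mem_listUnion {ι : Type*} [DecidableEq ι] {i : ι} {l : List (Finset ι)} :
    i ∈ listUnion l ↔ ∃ x ∈ l, i ∈ x := by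
  induction l with
  | nil => simp [listUnion]
  | cons a l ih => simp [listUnion, List.foldr_cons] at ih ⊢; simp [mem_union, ih]

lemma listUnion_take_subset {ι : Type*} [DecidableEq ι] (l : List (Finset ι)) (k : ℕ) :
    listUnion (l.take k) ⊆ listUnion l := by
  conv_rhs => rw [← List.take_append_drop k l]
  rw [listUnion_append]; exact subset_union_left

lemma clubSeq_union_subset {ι : Type*} [Fintype ι] [DecidableEq ι]
    (ben : ι → ℝ) (ρ : ι → Finset ι → ℝ)
    (hρle : ∀ i (E E' : Finset ι), E ⊆ E' → ρ i E' ≤ ρ i E)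
    (s t : List (Finset ι))
    (hs2 : ∀ k : Fin s.length, ∀ i ∈ s.get k, 0 ≤ ben i - ρ i (listUnion (s.take (k.val + 1))))
    (ht3 : ¬ ∃ J : Finset ι, J.Nonempty ∧ J ⊆ Finset.univ \ listUnion t ∧
      ∀ i ∈ J, 0 ≤ ben i - ρ i (listUnion t ∪ J)) :
    listUnion s ⊆ listUnion t := by
  set T := listUnion t with hT
  have key : ∀ k : ℕ, listUnion (s.take k) ⊆ T := by
    intro k
    induction k with
    | zero => simp [listUnion]
    | succ k ih =>
      by_cases h : k < s.length
      · have htake : s.take (k + 1) = s.take k ++ [s.get ⟨k, h⟩] := by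
          rw [List.take_succ]
          congr 1
          simp [List.getElem?_eq_getElem h, List.get_eq_getElem]
        set I := s.get ⟨k, h⟩ with hI
        have hIsub : I ⊆ T := by
          by_contra hns
          have hJ : (I \ T).Nonempty := sdiff_nonempty.mpr hns
          apply ht3
          refine ⟨I \ T, hJ, ?_, ?_⟩
          · intro x hx
            simp only [mem_sdiff, mem_univ, true_and] at hx ⊢
            exact hx.2
          · intro i hi
            have hiI : i ∈ I := (mem_sdiff.mp hi).1
            have h1 := hs2 ⟨k, h⟩ i hiI
            have hsub : listUnion (s.take (k + 1)) ⊆ T ∪ (I \ T) := by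
              rw [htake, listUnion_append]
              apply union_subset
              · exact ih.trans subset_union_left
              · intro x hx
                have hxI : x ∈ I := by
                  simpa [listUnion] using hx
                by_cases hxT : x ∈ T
                · exact mem_union_left _ hxT
                · exact mem_union_right _ (mem_sdiff.mpr ⟨hxI, hxT⟩)
            have := hρle i _ _ hsub
            linarith
        rw [htake, listUnion_append]
        apply union_subset ih
        intro x hx
        exact hIsub (by simpa [listUnion] using hx)
      · push_neg at h
        rw [List.take_of_length_le (by omega), ← List.take_of_length_le h]
        exact ih
  have := key s.length
  rwa [List.take_length] at this

/-- **Order independence and one-step formation** (Proposition 1).  Given the location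
`ℓ_a ∈ L` of superpower `a`'s club good, any two club-formation sequences have the same
union (so the maximum sphere of influence `I*(ℓ_a)` is well defined), and the single-term
sequence consisting of this union is itself a club-formation sequence, i.e. the shortest
club-formation sequence has length one. -/
theorem clubFormation_orderIndependent_and_length_one
    {ι L : Type*} [Fintype ι] [DecidableEq ι] [MetricSpace L] [Fintype L]
    (loc : ι → L) (ℓa : L) (g : ι → ℝ) (ρ : ι → Finset ι → ℝ)
    (hg : ∀ i, 0 ≤ g i)
    (hd : ∀ i, dist (loc i) ℓa ≤ 1)
    (hρpos : ∀ i (E : Finset ι), 0 < ρ i E)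
    (hρdec : ∀ i (E E' : Finset ι), E ⊂ E' → ρ i E' < ρ i E)
    (s t : List (Finset ι))
    (hs : IsClubFormationSeq (fun i => g i * (1 - dist (loc i) ℓa)) ρ s)
    (ht : IsClubFormationSeq (fun i => g i * (1 - dist (loc i) ℓa)) ρ t) :
    listUnion s = listUnion t ∧
    IsClubFormationSeq (fun i => g i * (1 - dist (loc i) ℓa)) ρ [listUnion s] := by
  have hρle : ∀ i (E E' : Finset ι), E ⊆ E' → ρ i E' ≤ ρ i E := by
    intro i E E' hEE'
    rcases eq_or_ssubset_of_subset hEE' with rfl | h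
    · exact le_refl _
    · exact (hρdec i E E' h).le
  obtain ⟨hs1, hs2, hs3⟩ := hs
  obtain ⟨ht1, ht2, ht3⟩ := ht
  have hst : listUnion s = listUnion t :=
    Finset.Subset.antisymm
      (clubSeq_union_subset _ ρ hρle s t hs2 ht3)
      (clubSeq_union_subset _ ρ hρle t s ht2 hs3)
  refine ⟨hst, ?_, ?_, ?_⟩
  · simp
  · intro k i hi
    have hk : k.val = 0 := by have h1 := k.isLt; simp only [List.length_singleton] at h1; omega
    have hU1 : listUnion ([listUnion s].take (k.val + 1)) = listUnion s := by
      simp [hk, listUnion]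
    rw [hU1]
    have hi' : i ∈ listUnion s := by
      have : [listUnion s].get k = listUnion s := by simp [List.get_eq_getElem, hk]
      rwa [this] at hi
    obtain ⟨x, hxl, hix⟩ := mem_listUnion.mp hi'
    obtain ⟨m, hm⟩ := List.mem_iff_get.mp hxl
    have h1 := hs2 m i (hm ▸ hix)
    have hsub : listUnion (s.take (m.val + 1)) ⊆ listUnion s := listUnion_take_subset s _
    have := hρle i _ _ hsub
    linarith
  · have hU : listUnion [listUnion s] = listUnion s := by simp [listUnion]
    rw [hU]
    exact hs3
end

section
/- In the symmetric case, if 0 ≤ g < g_U(n) := 2n/((n+3)(n−1)), then in the subgame perfect Nash equilibrium no club is formed by either superpower. -/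
open Finset

namespace Hegemon

/-!  The special-case model of Section 3: `n` is an odd integer (assumed sufficiently
large); small countries `I = {1, …, n-1}` are located at `i/n` in `[0,1]`; superpower `a`
is at `0` and `b` at `1`; the feasible locations for club goods are `k/n` for
`k ∈ {0, 1, …, n}`, encoded as `Fin (n+1)`; distance is `|x - y|`.  Country `j` has
measure `m j > 0` (superpowers: `mA`, `mB`), and a member `j` of `e`'s club with
small-country member set `δ` pays the cost share `m j / (m_e + ∑_{i ∈ δ} m i)`.
Small countries' behavior in each stage is the core outcome selected by the paper's
club-formation (stage one) and club-shifting (stage two) processes, and the superpowers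
play the two-stage sequential game (`a` moves first, `b` observes and responds) with
tie-breaking rules A1 and A2. -/

/-- The set of small countries `{1, …, n-1}`. -/
def countries (n : ℕ) : Finset ℕ := Finset.Icc 1 (n - 1)

/-- Union of a list of finsets. -/
def listUnion (s : List (Finset ℕ)) : Finset ℕ := s.foldr (· ∪ ·) ∅

/-- Utility of small country `i` (dependency `g i`, measure `m i`) as a member of the club
of a superpower with measure `me` whose club good is at location `k/n`, when the set of
small-country members is `δ`. -/
noncomputable def su (n : ℕ) (g m : ℕ → ℝ) (me : ℝ) (i : ℕ) (k : Fin (n + 1))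
    (δ : Finset ℕ) : ℝ :=
  g i * (1 - |(i : ℝ) / n - (k.val : ℝ) / n|) - m i / (me + ∑ j ∈ δ, m j)

/-- A stage-one club-formation sequence for a club good of the superpower with measure `me`
located at `k/n`: pairwise disjoint groups join step by step, each joining country gets a
nonnegative payoff, and no further nonempty group could join with everyone getting a
nonnegative payoff. -/
def IsFormationSeq (n : ℕ) (g m : ℕ → ℝ) (me : ℝ) (k : Fin (n + 1))
    (s : List (Finset ℕ)) : Prop :=
  (∀ E ∈ s, E ⊆ countries n) ∧ s.Pairwise Disjoint ∧
  (∀ j : Fin s.length, ∀ i ∈ s.get j, 0 ≤ su n g m me i k (listUnion (s.take (j.val + 1)))) ∧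
  ¬ ∃ J : Finset ℕ, J.Nonempty ∧ J ⊆ countries n \ listUnion s ∧
      ∀ i ∈ J, 0 ≤ su n g m me i k (listUnion s ∪ J)

/-- The condition of a single step of the stage-two club-shifting sequence, with `a`'s
stage-one club `Istar`, accumulated shifted set `pt` and accumulated changed set `pb`:
in the step `(t, b)`, countries in `t` outside `Istar` get a nonnegative payoff in `b`'s
club; countries in `t` from `Istar` are strictly better off (with nonnegative payoff) in
`b`'s club than in the remaining `a`-club; countries in `b \ t` from `Istar` have a
negative payoff in the remaining `a`-club. -/
def ShiftCond (n : ℕ) (gA gB m : ℕ → ℝ) (mA mB : ℝ) (ka kb : Fin (n + 1))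
    (Istar pt pb t b : Finset ℕ) : Prop :=
  t ⊆ b ∧ b ⊆ countries n ∧
  (∀ i ∈ t, i ∉ Istar → 0 ≤ su n gB m mB i kb (pt ∪ t)) ∧
  (∀ i ∈ t, i ∈ Istar →
      su n gA m mA i ka (Istar \ pb) < su n gB m mB i kb (pt ∪ t) ∧
      0 ≤ su n gB m mB i kb (pt ∪ t)) ∧
  (∀ i ∈ b \ t, i ∈ Istar → su n gA m mA i ka (Istar \ pb) < 0)

/-- Iterated shifting steps; the sets of countries shifting to `b`'s club are pairwise
disjoint. -/
def ShiftSteps (n : ℕ) (gA gB m : ℕ → ℝ) (mA mB : ℝ) (ka kb : Fin (n + 1))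
    (Istar : Finset ℕ) : Finset ℕ → Finset ℕ → List (Finset ℕ × Finset ℕ) → Prop
  | _, _, [] => True
  | pt, pb, (t, b) :: rest =>
      Disjoint pt t ∧ ShiftCond n gA gB m mA mB ka kb Istar pt pb t b ∧
      ShiftSteps n gA gB m mA mB ka kb Istar (pt ∪ t) (pb ∪ b) rest

/-- Union of the first components. -/
def uFirsts (s : List (Finset ℕ × Finset ℕ)) : Finset ℕ := listUnion (s.map Prod.fst)

/-- Union of the second components. -/
def uSeconds (s : List (Finset ℕ × Finset ℕ)) : Finset ℕ := listUnion (s.map Prod.snd)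

/-- A stage-two club-shifting sequence: admissible steps plus maximality. -/
def IsShiftSeq (n : ℕ) (gA gB m : ℕ → ℝ) (mA mB : ℝ) (ka kb : Fin (n + 1))
    (Istar : Finset ℕ) (s : List (Finset ℕ × Finset ℕ)) : Prop :=
  ShiftSteps n gA gB m mA mB ka kb Istar ∅ ∅ s ∧
  ¬ ∃ t b : Finset ℕ, b.Nonempty ∧ Disjoint t (uFirsts s) ∧ Disjoint b (uSeconds s) ∧
      ShiftCond n gA gB m mA mB ka kb Istar (uFirsts s) (uSeconds s) t b

/-- `Realizes n gA gB m mA mB la lb A B` holds iff, when `a` chooses `la` and `b` chooses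
`lb` (`none` = "no club"), the selected core outcomes of the club-formation and
club-shifting processes leave `a` with the set `A` and `b` with the set `B` of
small-country members. -/
def Realizes (n : ℕ) (gA gB m : ℕ → ℝ) (mA mB : ℝ) :
    Option (Fin (n + 1)) → Option (Fin (n + 1)) → Finset ℕ → Finset ℕ → Prop
  | some ka, some kb, A, B =>
      ∃ f s, IsFormationSeq n gA m mA ka f ∧
        IsShiftSeq n gA gB m mA mB ka kb (listUnion f) s ∧
        A = listUnion f \ uSeconds s ∧ B = uFirsts s
  | some ka, none, A, B =>
      (∃ f, IsFormationSeq n gA m mA ka f ∧ A = listUnion f) ∧ B = ∅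
  | none, some kb, A, B =>
      A = ∅ ∧ ∃ f, IsFormationSeq n gB m mB kb f ∧ B = listUnion f
  | none, none, A, B => A = ∅ ∧ B = ∅

/-- Payoff of superpower `a` (located at `0`): `1 - d(a, ℓ_a) - ρ_a(δ_a)` if it forms a
club, `0` otherwise. -/
noncomputable def payA (n : ℕ) (m : ℕ → ℝ) (mA : ℝ) :
    Option (Fin (n + 1)) → Finset ℕ → ℝ
  | some k, δ => 1 - |(k.val : ℝ) / n| - mA / (mA + ∑ i ∈ δ, m i)
  | none, _ => 0

/-- Payoff of superpower `b` (located at `1`). -/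
noncomputable def payB (n : ℕ) (m : ℕ → ℝ) (mB : ℝ) :
    Option (Fin (n + 1)) → Finset ℕ → ℝ
  | some k, δ => 1 - |1 - (k.val : ℝ) / n| - mB / (mB + ∑ i ∈ δ, m i)
  | none, _ => 0

/-- Subgame perfect Nash equilibrium with tie-breaking rules A1 and A2 of the two-stage
sequential game: `mem la lb` records the small-country members of the two clubs (realized
by the club-formation/club-shifting processes) for every pair of choices; `sb` is `b`'s
response function and `sa` is `a`'s choice.  In every subgame `b`'s response maximizes its
payoff, and `a`'s choice maximizes its payoff given `b`'s response function; A1: among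
equally good locations a superpower chooses the one closest to its home; A2: a club whose
payoff is `0` is not formed. -/
def IsSPNE (n : ℕ) (gA gB m : ℕ → ℝ) (mA mB : ℝ)
    (mem : Option (Fin (n + 1)) → Option (Fin (n + 1)) → Finset ℕ × Finset ℕ)
    (sa : Option (Fin (n + 1))) (sb : Option (Fin (n + 1)) → Option (Fin (n + 1))) : Prop :=
  (∀ la lb, Realizes n gA gB m mA mB la lb (mem la lb).1 (mem la lb).2) ∧
  (∀ la lb, payB n m mB lb (mem la lb).2 ≤ payB n m mB (sb la) (mem la (sb la)).2) ∧
  (∀ la (k k' : Fin (n + 1)), sb la = some k →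
      payB n m mB (some k') (mem la (some k')).2 = payB n m mB (some k) (mem la (some k)).2 →
      |1 - (k.val : ℝ) / n| ≤ |1 - (k'.val : ℝ) / n|) ∧
  (∀ la (k : Fin (n + 1)), sb la = some k → 0 < payB n m mB (some k) (mem la (some k)).2) ∧
  (∀ la, payA n m mA la (mem la (sb la)).1 ≤ payA n m mA sa (mem sa (sb sa)).1) ∧
  (∀ k k' : Fin (n + 1), sa = some k →
      payA n m mA (some k') (mem (some k') (sb (some k'))).1 =
        payA n m mA sa (mem sa (sb sa)).1 →
      |(k.val : ℝ) / n| ≤ |(k'.val : ℝ) / n|) ∧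
  (∀ k : Fin (n + 1), sa = some k → 0 < payA n m mA sa (mem sa (sb sa)).1)

/-- Club size including the superpower itself (and `0` if no club is formed). -/
def clubSize {α : Type*} (o : Option α) (memb : Finset ℕ) : ℕ :=
  if o.isSome then memb.card + 1 else 0

/-- The threshold `g_U(n) = 2n/((n+3)(n-1))`. -/
noncomputable def gU (n : ℕ) : ℝ := 2 * (n : ℝ) / (((n : ℝ) + 3) * ((n : ℝ) - 1))

/-- The threshold `g_B(n) = 4n/((n+3)(n+1))`. -/
noncomputable def gBthr (n : ℕ) : ℝ := 4 * (n : ℝ) / (((n : ℝ) + 3) * ((n : ℝ) + 1))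

/-- The threshold `g_B^h(n) = 4n/(n+1)²`. -/
noncomputable def gBh (n : ℕ) : ℝ := 4 * (n : ℝ) / ((n : ℝ) + 1) ^ 2

lemma mem_listUnion {i : ℕ} {s : List (Finset ℕ)} :
    i ∈ listUnion s ↔ ∃ E ∈ s, i ∈ E := by
  induction s with
  | nil => simp [listUnion]
  | cons a t ih =>
      simp only [listUnion, List.foldr] at *
      simp [Finset.mem_union, ih]

lemma listUnion_take_subset (s : List (Finset ℕ)) (m : ℕ) :
    listUnion (s.take m) ⊆ listUnion s := by
  intro i hi
  rw [mem_listUnion] at hi ⊢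
  obtain ⟨E, hE, hiE⟩ := hi
  exact ⟨E, List.take_subset m s hE, hiE⟩

/-- Key size–distance inequality: if `S ≤ 2D+2`, `S ≤ n`, `D ≤ n-1` and (via oddness)
`2D ≠ n-2, n-1... ` we get `S (n - D) ≤ (n+3)(n-1)/2`. -/
lemma size_dist_bound (n S D : ℕ) (hn : 5 ≤ n) (hodd : Odd n)
    (h1 : S ≤ 2 * D + 2) (h2 : S ≤ n) (hD : D ≤ n - 1) :
    (S : ℝ) * ((n : ℝ) - D) ≤ (((n : ℝ) + 3) * ((n : ℝ) - 1)) / 2 := by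
  have hS1 : (S : ℝ) ≤ 2 * D + 2 := by exact_mod_cast h1
  have hS2 : (S : ℝ) ≤ n := by exact_mod_cast h2
  have hDr : (D : ℝ) ≤ (n : ℝ) - 1 := by
    have : (D : ℝ) ≤ ((n - 1 : ℕ) : ℝ) := by exact_mod_cast hD
    have h5 : (1 : ℕ) ≤ n := by omega
    rw [Nat.cast_sub h5] at this; simpa using this
  have hS0 : (0 : ℝ) ≤ S := by positivity
  have hD0 : (0 : ℝ) ≤ D := by positivity
  have hnD : (0 : ℝ) ≤ (n : ℝ) - D := by linarith
  rcases le_or_gt (2 * D + 3) n with hcase | hcase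
  · -- interior case : 2D ≤ n - 3
    have hc : (2 : ℝ) * D + 3 ≤ n := by exact_mod_cast hcase
    nlinarith [sq_nonneg ((n : ℝ) - 2 * D - 3), mul_le_mul_of_nonneg_right hS1 hnD]
  · -- boundary case : 2D ≥ n - 1 by parity
    obtain ⟨m, hm⟩ := hodd
    have hge : n - 1 ≤ 2 * D := by omega
    have hgr : (n : ℝ) - 1 ≤ 2 * D := by
      have : ((n - 1 : ℕ) : ℝ) ≤ ((2 * D : ℕ) : ℝ) := by exact_mod_cast hge
      have h5 : (1 : ℕ) ≤ n := by omega
      rw [Nat.cast_sub h5] at this; push_cast at this; linarith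
    have hn5 : (5 : ℝ) ≤ n := by exact_mod_cast hn
    nlinarith [mul_le_mul_of_nonneg_right hS2 hnD]

/-- In the symmetric case with `g < g_U(n)`, every stage-one formation sequence yields an
empty club. -/
lemma formation_empty {n : ℕ} (hn : 5 ≤ n) (hodd : Odd n) {g : ℝ} (hg0 : 0 ≤ g)
    (hg : g < gU n) (k : Fin (n + 1)) (f : List (Finset ℕ))
    (hf : IsFormationSeq n (fun _ => g) (fun _ => 1) 1 k f) :
    listUnion f = ∅ := by
  by_contra hne
  obtain ⟨hsub0, _, hstep, _⟩ := hf
  have hΔne : (listUnion f).Nonempty := Finset.nonempty_of_ne_empty hne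
  set Δ := listUnion f with hΔ
  have hsub : Δ ⊆ countries n := by
    intro x hx
    obtain ⟨E, hE, hxE⟩ := mem_listUnion.mp hx
    exact hsub0 E hE hxE
  obtain ⟨i, hiΔ, hmax⟩ := Δ.exists_max_image (fun x => ((x : ℤ) - (k.val : ℤ)).natAbs) hΔne
  set D : ℕ := ((i : ℤ) - (k.val : ℤ)).natAbs with hDdef
  -- basic ranges
  have hik : 1 ≤ i ∧ i ≤ n - 1 := Finset.mem_Icc.mp (hsub hiΔ)
  have hkn : (k : ℕ) ≤ n := Nat.lt_succ_iff.mp k.isLt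
  have hDle : D ≤ n - 1 := by omega
  have hDlen : D ≤ n := by omega
  -- cardinality bounds
  have hcard1 : Δ.card ≤ n - 1 := by
    have := Finset.card_le_card hsub
    simpa [countries, Nat.card_Icc] using this
  have hcard2 : Δ.card ≤ 2 * D + 1 := by
    have hinj : Set.InjOn (fun x : ℕ => (x : ℤ)) Δ := fun x _ y _ h => by simpa using h
    have hmaps : ∀ x ∈ Δ, (x : ℤ) ∈ Finset.Icc ((k.val : ℤ) - D) ((k.val : ℤ) + D) := by
      intro x hx
      have hb := hmax x hx
      simp only [Finset.mem_Icc]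
      omega
    have := Finset.card_le_card_of_injOn (fun x : ℕ => (x : ℤ)) hmaps hinj
    rw [Int.card_Icc] at this
    omega
  -- the joining condition for i
  obtain ⟨E, hEf, hiE⟩ := mem_listUnion.mp hiΔ
  obtain ⟨j, hj⟩ := List.mem_iff_get.mp hEf
  have hjoin := hstep j i (by rw [hj]; exact hiE)
  set δ := listUnion (f.take (j.val + 1)) with hδ
  have hδsub : δ ⊆ Δ := listUnion_take_subset f (j.val + 1)
  have hδcard : δ.card ≤ Δ.card := Finset.card_le_card hδsub
  -- rewrite su
  have hsum : ∀ t : Finset ℕ, (∑ _x ∈ t, (1 : ℝ)) = t.card := by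
    intro t; simp
  rw [su, hsum] at hjoin
  -- distance as D/n
  have hnr : (0 : ℝ) < n := by positivity
  have habs : |(i : ℝ) / n - (k.val : ℝ) / n| = (D : ℝ) / n := by
    rw [div_sub_div_same, abs_div, abs_of_pos hnr]
    congr 1
    rw [hDdef, Nat.cast_natAbs]
    push_cast
    ring_nf
  rw [habs] at hjoin
  -- chain of inequalities
  have hδpos : (0 : ℝ) < 1 + (δ.card : ℝ) := by positivity
  have hΔpos : (0 : ℝ) < 1 + (Δ.card : ℝ) := by positivity
  have hstep1 : 1 / (1 + (Δ.card : ℝ)) ≤ g * (1 - (D : ℝ) / n) := by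
    have h1 : 1 / (1 + (Δ.card : ℝ)) ≤ 1 / (1 + (δ.card : ℝ)) := by
      apply one_div_le_one_div_of_le hδpos
      have : (δ.card : ℝ) ≤ Δ.card := by exact_mod_cast hδcard
      linarith
    linarith
  -- multiply out : n ≤ g * S * (n - D)
  set S : ℕ := Δ.card + 1 with hSdef
  have hS2n : S ≤ n := by omega
  have hS2D : S ≤ 2 * D + 2 := by omega
  have hmain : (n : ℝ) ≤ g * ((S : ℝ) * ((n : ℝ) - D)) := by
    have hSr : (1 + (Δ.card : ℝ)) = (S : ℝ) := by push_cast [hSdef]; ring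
    have h2 : 1 ≤ g * (1 - (D : ℝ) / n) * (S : ℝ) := by
      rw [← hSr]
      calc (1 : ℝ) = (1 / (1 + (Δ.card : ℝ))) * (1 + (Δ.card : ℝ)) := by
            field_simp
        _ ≤ g * (1 - (D : ℝ) / n) * (1 + (Δ.card : ℝ)) :=
            mul_le_mul_of_nonneg_right hstep1 (le_of_lt hΔpos)
    have h3 : (1 - (D : ℝ) / n) * (n : ℝ) = (n : ℝ) - D := by
      field_simp
    calc (n : ℝ) = 1 * n := by ring
      _ ≤ g * (1 - (D : ℝ) / n) * (S : ℝ) * n := by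
          apply mul_le_mul_of_nonneg_right h2 (le_of_lt hnr)
      _ = g * ((S : ℝ) * ((1 - (D : ℝ) / n) * n)) := by ring
      _ = g * ((S : ℝ) * ((n : ℝ) - D)) := by rw [h3]
  -- combine with the size-distance bound
  have hbound := size_dist_bound n S D hn hodd hS2D hS2n hDle
  have hfin : (n : ℝ) ≤ g * ((((n : ℝ) + 3) * ((n : ℝ) - 1)) / 2) := by
    have hprod0 : (0 : ℝ) ≤ (S : ℝ) * ((n : ℝ) - D) := by
      have : (D : ℝ) ≤ n := by exact_mod_cast hDlen
      have : (0 : ℝ) ≤ (n : ℝ) - D := by linarith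
      positivity
    calc (n : ℝ) ≤ g * ((S : ℝ) * ((n : ℝ) - D)) := hmain
      _ ≤ g * ((((n : ℝ) + 3) * ((n : ℝ) - 1)) / 2) := mul_le_mul_of_nonneg_left hbound hg0
  have hn5 : (5 : ℝ) ≤ n := by exact_mod_cast hn
  have hfac : (0 : ℝ) < (((n : ℝ) + 3) * ((n : ℝ) - 1)) / 2 := by nlinarith
  have hgU : gU n * ((((n : ℝ) + 3) * ((n : ℝ) - 1)) / 2) = n := by
    have h3 : ((n : ℝ) + 3) ≠ 0 := by linarith
    have h4 : ((n : ℝ) - 1) ≠ 0 := by linarith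
    rw [gU]; field_simp
  have : g * ((((n : ℝ) + 3) * ((n : ℝ) - 1)) / 2) < n := by
    calc g * ((((n : ℝ) + 3) * ((n : ℝ) - 1)) / 2)
        < gU n * ((((n : ℝ) + 3) * ((n : ℝ) - 1)) / 2) :=
          mul_lt_mul_of_pos_right hg hfac
      _ = n := hgU
  linarith

/-- **No hegemon** (Proposition 7).  In the symmetric case (`m_j = 1` for all countries and
`g_{ia} = g_{ib} = g`), if `0 ≤ g < g_U(n) = 2n/((n+3)(n-1))`, then in the subgame perfect
Nash equilibrium no club is formed by either superpower. -/
theorem no_hegemon :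
    ∃ N : ℕ, ∀ n : ℕ, N ≤ n → Odd n →
      ∀ g : ℝ, 0 ≤ g → g < gU n →
        ∀ (mem : Option (Fin (n + 1)) → Option (Fin (n + 1)) → Finset ℕ × Finset ℕ)
          (sa : Option (Fin (n + 1))) (sb : Option (Fin (n + 1)) → Option (Fin (n + 1))),
          IsSPNE n (fun _ => g) (fun _ => g) (fun _ => 1) 1 1 mem sa sb →
          sa = none ∧ sb sa = none := by
  refine ⟨5, fun n hn hodd g hg0 hg mem sa sb hspne => ?_⟩
  obtain ⟨hreal, hBopt, hA1B, hBpos, hAopt, hA1A, hApos⟩ := hspne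
  have hnr : (0 : ℝ) < n := by
    have : (5 : ℝ) ≤ n := by exact_mod_cast hn
    linarith
  -- b never forms a club against no club of a
  have hsbnone : sb none = none := by
    by_contra hne
    obtain ⟨kb, hkb⟩ := Option.ne_none_iff_exists'.mp hne
    have hpos := hBpos none kb hkb
    have h := hreal none (some kb)
    simp only [Realizes] at h
    obtain ⟨-, f, hform, hB⟩ := h
    have hBempty : (mem none (some kb)).2 = ∅ := by
      rw [hB, formation_empty hn hodd hg0 hg kb f hform]
    rw [hBempty] at hpos
    simp only [payB, Finset.sum_empty] at hpos
    have := abs_nonneg (1 - (kb.val : ℝ) / n)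
    norm_num at hpos
    linarith
  -- a never forms a club
  have hsanone : sa = none := by
    by_contra hne
    obtain ⟨ka, hka⟩ := Option.ne_none_iff_exists'.mp hne
    have hpos := hApos ka hka
    rw [hka] at hpos
    have hAempty : (mem (some ka) (sb (some ka))).1 = ∅ := by
      have h := hreal (some ka) (sb (some ka))
      cases hlb : sb (some ka) with
      | none =>
          rw [hlb] at h
          simp only [Realizes] at h
          obtain ⟨⟨f, hform, hA⟩, -⟩ := h
          rw [hA, formation_empty hn hodd hg0 hg ka f hform]
      | some kb =>
          rw [hlb] at h
          simp only [Realizes] at h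
          obtain ⟨f, s, hform, -, hA, -⟩ := h
          rw [hA, formation_empty hn hodd hg0 hg ka f hform]
          simp
    rw [hAempty] at hpos
    simp only [payA, Finset.sum_empty] at hpos
    have := abs_nonneg ((ka.val : ℝ) / n)
    norm_num at hpos
    linarith
  refine ⟨hsanone, ?_⟩
  rw [hsanone, hsbnone]

end Hegemon
end

section
/- There exists N such that for every integer n ≥ N the following holds: let σ(k) := k/n + 1/(k+1) − 1/(n+1−k) for integers k with 1 ≤ k ≤ n/2, and let m := ⌊(√(1+4n) − 1)/2⌋. Then every minimizer of σ over the integers {1, …, ⌊n/2⌋} lies in {m, m+1}. -/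
set_option maxHeartbeats 1600000


/-- For all sufficiently large `n`: with `σ(k) = k/n + 1/(k+1) - 1/(n+1-k)` defined on the
integers `k` with `1 ≤ k ≤ n/2`, and `m = ⌊(√(1+4n) - 1)/2⌋`, every minimizer of `σ` over
the integers `{1, …, ⌊n/2⌋}` lies in `{m, m+1}`. -/
theorem sigma_min_near_sqrt :
    ∃ N : ℕ, ∀ n : ℕ, N ≤ n →
      ∀ m : ℕ, m = (⌊(Real.sqrt (1 + 4 * (n : ℝ)) - 1) / 2⌋).toNat →
        ∀ k ∈ Finset.Icc 1 (n / 2),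
          (∀ j ∈ Finset.Icc 1 (n / 2),
              (k : ℝ) / n + 1 / ((k : ℝ) + 1) - 1 / ((n : ℝ) + 1 - (k : ℝ)) ≤
                (j : ℝ) / n + 1 / ((j : ℝ) + 1) - 1 / ((n : ℝ) + 1 - (j : ℝ))) →
          k = m ∨ k = m + 1 := by
  refine ⟨2, fun n hn m hm k hk hmin => ?_⟩
  rw [Finset.mem_Icc] at hk
  obtain ⟨hk1, hk2⟩ := hk
  -- basic facts about m
  have hs0 : (0:ℝ) ≤ 1 + 4 * (n:ℝ) := by positivity
  set s : ℝ := Real.sqrt (1 + 4 * (n:ℝ)) with hsdef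
  have hs : s ^ 2 = 1 + 4 * (n:ℝ) := Real.sq_sqrt hs0
  have hs1 : (1:ℝ) ≤ s := by
    rw [show (1:ℝ) = Real.sqrt 1 by simp [Real.sqrt_one]]
    exact Real.sqrt_le_sqrt (by linarith)
  have ht0 : (0:ℝ) ≤ (s - 1) / 2 := by linarith
  have hfl0 : 0 ≤ ⌊(s - 1) / 2⌋ := Int.floor_nonneg.mpr ht0
  have hmz : (m:ℤ) = ⌊(s - 1) / 2⌋ := by
    rw [hm]; exact Int.toNat_of_nonneg hfl0
  have h1 : (m:ℝ) ≤ (s - 1) / 2 := by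
    have := Int.floor_le ((s - 1) / 2)
    rw [← hmz] at this; exact_mod_cast this
  have h2 : (s - 1) / 2 < (m:ℝ) + 1 := by
    have := Int.lt_floor_add_one ((s - 1) / 2)
    rw [← hmz] at this; exact_mod_cast this
  have hmn : m * (m + 1) ≤ n := by
    have hr : ((m * (m + 1) : ℕ) : ℝ) ≤ (n:ℝ) := by
      push_cast
      nlinarith [hs, h1, hs1]
    exact_mod_cast hr
  have hnm : n < m * m + 3 * m + 2 := by
    have hr : (n:ℝ) < ((m * m + 3 * m + 2 : ℕ) : ℝ) := by
      push_cast
      nlinarith [hs, h2, Real.sqrt_nonneg (1 + 4 * (n:ℝ))]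
    exact_mod_cast hr
  have hn2 : 2 ≤ n := by omega
  have hN0 : (0:ℝ) < (n:ℝ) := by positivity
  rcases Nat.lt_or_ge k m with hlt | hge
  · -- low case: k < m, contradiction
    exfalso
    have hm2 : 2 ≤ m := by omega
    have hm_half : m ≤ n / 2 := by
      have : 2 * m ≤ m * (m + 1) := by nlinarith
      omega
    have hmem : k + 1 ∈ Finset.Icc 1 (n / 2) := by
      rw [Finset.mem_Icc]; omega
    have h := hmin (k + 1) hmem
    push_cast at h
    have hc1 : (1:ℝ) ≤ (k:ℝ) := by exact_mod_cast hk1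
    set c : ℝ := (k:ℝ) with hcdef
    set N : ℝ := (n:ℝ) with hNdef
    have hmul : (c + 1) * (c + 2) ≤ N := by
      have hnat : (k + 1) * (k + 2) ≤ n := le_trans (Nat.mul_le_mul (by omega) (by omega)) hmn
      have := (Nat.cast_le (α := ℝ)).mpr hnat
      push_cast at this; nlinarith [this]
    have hcN : c + 2 ≤ N := by nlinarith
    have hd1 : (0:ℝ) < c + 1 := by linarith
    have hd2 : (0:ℝ) < c + 2 := by linarith
    have hd3 : (0:ℝ) < N - c := by linarith
    have hd4 : (0:ℝ) < N + 1 - c := by linarith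
    have e1 : ((c + 1) / N + 1 / (c + 1 + 1) - 1 / (N + 1 - (c + 1)))
        - (c / N + 1 / (c + 1) - 1 / (N + 1 - c))
        = 1 / N - 1 / ((c + 1) * (c + 2)) - 1 / ((N - c) * (N + 1 - c)) := by
      have h21 : c + 1 + 1 = c + 2 := by ring
      have h22 : N + 1 - (c + 1) = N - c := by ring
      rw [h21, h22]
      field_simp
      ring
    have hle : 1 / N ≤ 1 / ((c + 1) * (c + 2)) :=
      one_div_le_one_div_of_le (by positivity) hmul
    have hpos : (0:ℝ) < 1 / ((N - c) * (N + 1 - c)) := by positivity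
    linarith [h, e1, hle, hpos]
  · rcases Nat.lt_or_ge k (m + 2) with hlt2 | hge2
    · omega
    · -- high case: k ≥ m + 2, contradiction
      exfalso
      obtain ⟨j, rfl⟩ : ∃ j, k = j + 1 := ⟨k - 1, by omega⟩
      have hjm : m + 1 ≤ j := by omega
      have hmem : j ∈ Finset.Icc 1 (n / 2) := by
        rw [Finset.mem_Icc]; omega
      have h := hmin j hmem
      push_cast at h
      have hx1 : (1:ℝ) ≤ (j:ℝ) := by exact_mod_cast (by omega : 1 ≤ j)
      have hnat : n + 5 ≤ (j + 1) * (j + 2) := by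
        have h1' : (m + 2) * (m + 3) ≤ (j + 1) * (j + 2) :=
          Nat.mul_le_mul (by omega) (by omega)
        have he : (m + 2) * (m + 3) = m * m + 5 * m + 6 := by ring
        omega
      have hP : (n:ℝ) + 5 ≤ ((j:ℝ) + 1) * ((j:ℝ) + 2) := by
        have := (Nat.cast_le (α := ℝ)).mpr hnat
        push_cast at this; nlinarith [this]
      have hx2 : 2 * ((j:ℝ) + 1) ≤ (n:ℝ) := by
        have h2j : 2 * (j + 1) ≤ n := by omega
        have := (Nat.cast_le (α := ℝ)).mpr h2j
        push_cast at this; linarith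
      set x : ℝ := (j:ℝ) with hxdef
      set N : ℝ := (n:ℝ) with hNdef
      have hN4 : (4:ℝ) ≤ N := by linarith
      have hd3 : (0:ℝ) < N - x := by linarith
      have hd4 : (0:ℝ) < N + 1 - x := by linarith
      set P : ℝ := (x + 1) * (x + 2) with hPdef
      set Q : ℝ := (N - x) * (N + 1 - x) with hQdef
      have hP0 : (0:ℝ) < P := by positivity
      have hQ0 : (0:ℝ) < Q := by positivity
      have hQn : N ^ 2 / 4 + N ≤ Q := by
        have ha : N / 2 + 1 ≤ N - x := by linarith
        have hb : N / 2 + 2 ≤ N + 1 - x := by linarith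
        nlinarith [mul_le_mul ha hb (by linarith) (by linarith)]
      have h5 : (5:ℝ) ≤ P - N := by rw [hPdef]; linarith
      have hQN : N ^ 2 / 4 ≤ Q - N := by linarith
      have hprod : 5 * (N ^ 2 / 4) ≤ (P - N) * (Q - N) :=
        mul_le_mul h5 hQN (by positivity) (by linarith)
      have hkey : 1 / P + 1 / Q < 1 / N := by
        rw [div_add_div _ _ (ne_of_gt hP0) (ne_of_gt hQ0),
          div_lt_div_iff₀ (by positivity) hN0]
        nlinarith [hprod, hN4]
      have e1 : ((x + 1) / N + 1 / (x + 1 + 1) - 1 / (N + 1 - (x + 1)))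
          - (x / N + 1 / (x + 1) - 1 / (N + 1 - x))
          = 1 / N - 1 / P - 1 / Q := by
        have h21 : x + 1 + 1 = x + 2 := by ring
        have h22 : N + 1 - (x + 1) = N - x := by ring
        rw [h21, h22, hPdef, hQdef]
        field_simp
        ring
      linarith [h, e1, hkey]
end
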